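/- Let d ≥ 1, t₀ ≤ T, p ≥ 2 and C₃ > 0. Suppose μ, σ : [t₀,T] × ℝ^d → ℝ^d satisfy the Khasminskii-type condition ⟨y, μ(t,y)⟩ + (p−1)|σ(t,y)|² ≤ C₃(1 + |y|²) for all t ∈ [t₀,T] and y ∈ ℝ^d. Fix R₀ > 0. Then there exists a constant C₅ > 0 (one may take C₅ = 2C₃·max(1, 1/R₀²)), depending only on C₃ and R₀, such that for every R ≥ R₀, every t ∈ [t₀,T] and every y ∈ ℝ^d, ⟨y, μ(t, π_R(y))⟩ + (p−1)|σ(t, π_R(y))|² ≤ C₅(1 + |y|²). -/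

import Mathlib

open Classical

/-- The truncation map `π_R : ℝ^d → ℝ^d`, `π_R(y) = (min(|y|,R)/|y|)·y` for `y ≠ 0`,
`π_R(0) = 0`. -/
noncomputable def truncMap {d : ℕ} (R : ℝ) (y : EuclideanSpace ℝ (Fin d)) :
    EuclideanSpace ℝ (Fin d) :=
  if y = 0 then 0 else (min ‖y‖ R / ‖y‖) • y

/-!
Write `π_R y = y / λ` with `λ = max 1 (|y|/R) ≥ 1`. Then `⟨y, μ(π_R y)⟩ = λ ⟨π_R y, μ(π_R y)⟩`,
and since the diffusion term is nonnegative, the left-hand side of the truncated condition is at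
most `λ` times the original condition at `π_R y`, i.e. at most `λ C₃ (1 + min(|y|,R)²)`.
As `λ · min(|y|,R) = |y|`, this is `C₃ (λ + |y| min(|y|,R)) ≤ C₃ (λ + |y|²)`, and
`λ ≤ max(1, |y|/R₀)` is controlled by `max(1, 1/R₀²) (1 + |y|²)` via `2ab ≤ a² + b²`.
-/

section Scalar

variable {r R : ℝ}

theorem max_one_div_mul_min (hR : 0 < R) : max 1 (r / R) * min r R = r := by
  rcases le_total r R with h | h
  · rw [max_eq_left ((div_le_one hR).mpr h), min_eq_left h, one_mul]
  · rw [max_eq_right ((one_le_div hR).mpr h), min_eq_right h, div_mul_cancel₀ r hR.ne']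

theorem max_one_div_le_mul_one_add_sq {R₀ : ℝ} (hR₀ : 0 < R₀) (hR : R₀ ≤ R) (hr : 0 ≤ r) :
    max 1 (r / R) ≤ max 1 (1 / R₀ ^ 2) * (1 + r ^ 2) := by
  set K := max 1 (1 / R₀ ^ 2)
  have hK : 1 ≤ K := le_max_left _ _
  refine max_le (by nlinarith [sq_nonneg r]) ?_
  have hAMGM : r / R₀ ≤ (1 / R₀ ^ 2 + r ^ 2) / 2 := by
    have := two_mul_le_add_sq (1 / R₀) r
    rw [div_pow, one_pow] at this
    rw [div_eq_mul_one_div r R₀]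
    linarith
  calc r / R ≤ r / R₀ := div_le_div_of_nonneg_left hr hR₀ hR
    _ ≤ (1 / R₀ ^ 2 + r ^ 2) / 2 := hAMGM
    _ ≤ K * (1 + r ^ 2) := by nlinarith [le_max_right 1 (1 / R₀ ^ 2), sq_nonneg r]

theorem max_one_div_mul_one_add_min_sq_le {R₀ : ℝ} (hR₀ : 0 < R₀) (hR : R₀ ≤ R) (hr : 0 ≤ r) :
    max 1 (r / R) * (1 + min r R ^ 2) ≤ 2 * max 1 (1 / R₀ ^ 2) * (1 + r ^ 2) := by
  have hRpos : 0 < R := hR₀.trans_le hR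
  have hK : 1 ≤ max 1 (1 / R₀ ^ 2) := le_max_left _ _
  have hmin : r * min r R ≤ r ^ 2 := by
    rw [sq]; exact mul_le_mul_of_nonneg_left (min_le_left r R) hr
  calc max 1 (r / R) * (1 + min r R ^ 2)
      = max 1 (r / R) + (max 1 (r / R) * min r R) * min r R := by ring
    _ = max 1 (r / R) + r * min r R := by rw [max_one_div_mul_min hRpos]
    _ ≤ max 1 (1 / R₀ ^ 2) * (1 + r ^ 2) + r ^ 2 := add_le_add (max_one_div_le_mul_one_add_sq hR₀ hR hr) hmin
    _ ≤ 2 * max 1 (1 / R₀ ^ 2) * (1 + r ^ 2) := by nlinarith [sq_nonneg r]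

end Scalar

theorem khasminskii_smul_le {E F : Type*} [NormedAddCommGroup E] [InnerProductSpace ℝ E]
    [NormedAddCommGroup F] {c lam : ℝ} (hc : 0 ≤ c) (hlam : 1 ≤ lam) (z v : E) (w : F) :
    (inner ℝ (lam • z) v : ℝ) + c * ‖w‖ ^ 2 ≤ lam * ((inner ℝ z v : ℝ) + c * ‖w‖ ^ 2) := by
  have hdiff : c * ‖w‖ ^ 2 ≤ lam * (c * ‖w‖ ^ 2) :=
    le_mul_of_one_le_left (by positivity) hlam
  rw [real_inner_smul_left]
  linarith

section Truncation

variable {d : ℕ} {R : ℝ}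

theorem norm_truncMap (hR : 0 ≤ R) (y : EuclideanSpace ℝ (Fin d)) :
    ‖truncMap R y‖ = min ‖y‖ R := by
  by_cases hy : y = 0
  · simp [truncMap, hy, hR]
  · have hyn : 0 < ‖y‖ := norm_pos_iff.mpr hy
    rw [truncMap, if_neg hy, norm_smul, Real.norm_of_nonneg (by positivity),
      div_mul_cancel₀ _ hyn.ne']

theorem max_one_div_smul_truncMap (hR : 0 < R) (y : EuclideanSpace ℝ (Fin d)) :
    max 1 (‖y‖ / R) • truncMap R y = y := by
  by_cases hy : y = 0
  · simp [truncMap, hy]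
  · have hyn : 0 < ‖y‖ := norm_pos_iff.mpr hy
    rw [truncMap, if_neg hy, smul_smul, ← mul_div_assoc,
      max_one_div_mul_min hR, div_self hyn.ne', one_smul]

end Truncation

theorem truncated_khasminskii_general
    (d : ℕ) (t₀ T : ℝ)
    (p C₃ : ℝ) (hp : 2 ≤ p) (hC₃ : 0 < C₃)
    (μ σ : ℝ → EuclideanSpace ℝ (Fin d) → EuclideanSpace ℝ (Fin d))
    (hcond : ∀ t ∈ Set.Icc t₀ T, ∀ y : EuclideanSpace ℝ (Fin d),
      (inner ℝ y (μ t y) : ℝ) + (p - 1) * ‖σ t y‖ ^ 2 ≤ C₃ * (1 + ‖y‖ ^ 2))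
    (R₀ : ℝ) (hR₀ : 0 < R₀) :
    ∃ C₅ : ℝ, 0 < C₅ ∧
      ∀ R : ℝ, R₀ ≤ R → ∀ t ∈ Set.Icc t₀ T, ∀ y : EuclideanSpace ℝ (Fin d),
        (inner ℝ y (μ t (truncMap R y)) : ℝ) + (p - 1) * ‖σ t (truncMap R y)‖ ^ 2
          ≤ C₅ * (1 + ‖y‖ ^ 2) := by
  refine ⟨C₃ * (2 * max 1 (1 / R₀ ^ 2)), by positivity, fun R hR t ht y => ?_⟩
  have hRpos : 0 < R := hR₀.trans_le hR
  set z := truncMap R y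
  set lam := max 1 (‖y‖ / R)
  calc (inner ℝ y (μ t z) : ℝ) + (p - 1) * ‖σ t z‖ ^ 2
      = (inner ℝ (lam • z) (μ t z) : ℝ) + (p - 1) * ‖σ t z‖ ^ 2 := by
        rw [max_one_div_smul_truncMap hRpos]
    _ ≤ lam * ((inner ℝ z (μ t z) : ℝ) + (p - 1) * ‖σ t z‖ ^ 2) :=
        khasminskii_smul_le (by linarith) (le_max_left _ _) _ _ _
    _ ≤ lam * (C₃ * (1 + min ‖y‖ R ^ 2)) := by
        rw [← norm_truncMap hRpos.le]
        exact mul_le_mul_of_nonneg_left (hcond t ht z) (by positivity)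
    _ = C₃ * (lam * (1 + min ‖y‖ R ^ 2)) := by ring
    _ ≤ C₃ * (2 * max 1 (1 / R₀ ^ 2) * (1 + ‖y‖ ^ 2)) :=
        mul_le_mul_of_nonneg_left
          (max_one_div_mul_one_add_min_sq_le hR₀ hR (norm_nonneg y)) hC₃.le
    _ = C₃ * (2 * max 1 (1 / R₀ ^ 2)) * (1 + ‖y‖ ^ 2) := by ring

/-- The truncated coefficients inherit the Khasminskii-type condition with a constant
independent of the truncation level `R ≥ R₀`. -/
theorem truncated_khasminskii
    (d : ℕ) (hd : 1 ≤ d) (t₀ T : ℝ) (ht : t₀ ≤ T)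
    (p C₃ : ℝ) (hp : 2 ≤ p) (hC₃ : 0 < C₃)
    (μ σ : ℝ → EuclideanSpace ℝ (Fin d) → EuclideanSpace ℝ (Fin d))
    (hcond : ∀ t ∈ Set.Icc t₀ T, ∀ y : EuclideanSpace ℝ (Fin d),
      (inner ℝ y (μ t y) : ℝ) + (p - 1) * ‖σ t y‖ ^ 2 ≤ C₃ * (1 + ‖y‖ ^ 2))
    (R₀ : ℝ) (hR₀ : 0 < R₀) :
    ∃ C₅ : ℝ, 0 < C₅ ∧
      ∀ R : ℝ, R₀ ≤ R → ∀ t ∈ Set.Icc t₀ T, ∀ y : EuclideanSpace ℝ (Fin d),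
        (inner ℝ y (μ t (truncMap R y)) : ℝ) + (p - 1) * ‖σ t (truncMap R y)‖ ^ 2
          ≤ C₅ * (1 + ‖y‖ ^ 2) :=
  truncated_khasminskii_general d t₀ T p C₃ hp hC₃ μ σ hcond R₀ hR₀
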